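/- Let 𝒜, 𝒥, β_R, δ_R ∈ ℝ and set Re Υ^{±}_{6;2} = (2198208/6965)·𝒥² ± (62451/14)·𝒜·𝒥² + (1791/14)·√6·β_R − (1791/7)·√6·δ_R. If Re Υ⁺_{6;2} = 0, then Re Υ⁻_{6;2} = −(62451/7)·𝒜·𝒥². Consequently, for any values of the remaining (imaginary-part) parameters, the complex obstruction Υ⁻_{6;2} is nonzero whenever Re Υ⁺_{6;2} = 0, 𝒜 ≠ 0 and 𝒥 ≠ 0. -/
import Mathlib


open Complex

/- STATEMENT 1: If `Re Υ⁺_{6;2} = 0` then `Re Υ⁻_{6;2} = −(62451/7)·𝒜·𝒥²`; consequently,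
for any values of the imaginary-part parameters `βI, δI`, the complex obstruction
`Υ⁻_{6;2}` is nonzero whenever `Re Υ⁺_{6;2} = 0`, `𝒜 ≠ 0` and `𝒥 ≠ 0`. -/
theorem upsilon_minus_nonzero
    (𝒜 𝒥 βR δR : ℝ)
    (hplus : (2198208 / 6965) * 𝒥 ^ 2 + (62451 / 14) * 𝒜 * 𝒥 ^ 2
        + (1791 / 14) * Real.sqrt 6 * βR - (1791 / 7) * Real.sqrt 6 * δR = 0) :
    ((2198208 / 6965) * 𝒥 ^ 2 - (62451 / 14) * 𝒜 * 𝒥 ^ 2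
        + (1791 / 14) * Real.sqrt 6 * βR - (1791 / 7) * Real.sqrt 6 * δR
      = -(62451 / 7) * 𝒜 * 𝒥 ^ 2) ∧
    (𝒜 ≠ 0 → 𝒥 ≠ 0 → ∀ βI δI : ℝ,
      ((2198208 / 6965 : ℂ) * (𝒥 : ℂ) ^ 2 - (62451 / 14 : ℂ) * (𝒜 : ℂ) * (𝒥 : ℂ) ^ 2
        - (62691 / 2408 : ℂ) * (Real.sqrt 6 : ℝ) * Complex.I * (𝒜 : ℂ) * (βI : ℂ)
        + (1791 / 14 : ℂ) * (Real.sqrt 6 : ℝ) * (βR : ℂ)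
        - (263327 / 31605 : ℂ) * Complex.I * (βI : ℂ)
        - (116 / 43 : ℂ) * (Real.sqrt 6 : ℝ) * Complex.I * (𝒜 : ℂ) * (δI : ℂ)
        - (1791 / 7 : ℂ) * (Real.sqrt 6 : ℝ) * (δR : ℂ)
        + (183184 / 13545 : ℂ) * (Real.sqrt 6 : ℝ) * Complex.I * (δI : ℂ)) ≠ 0) := by
  have hre : (2198208 / 6965) * 𝒥 ^ 2 - (62451 / 14) * 𝒜 * 𝒥 ^ 2
        + (1791 / 14) * Real.sqrt 6 * βR - (1791 / 7) * Real.sqrt 6 * δR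
      = -(62451 / 7) * 𝒜 * 𝒥 ^ 2 := by linarith
  refine ⟨hre, fun hA hJ βI δI h0 ↦ ?_⟩
  have := congrArg Complex.re h0
  simp [Complex.add_re, Complex.sub_re, Complex.mul_re, Complex.mul_im, ← Complex.ofReal_pow] at this
  have hAJ : -(62451 / 7) * 𝒜 * 𝒥 ^ 2 ≠ 0 := by
    have : (𝒥:ℝ) ^ 2 ≠ 0 := pow_ne_zero _ hJ
    positivity
  apply hAJ
  rw [← hre]
  linarith [this]
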